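/- arXiv:2504.16929 — 2 statements merged into one kernel-verified Lean document; each statement's English description precedes it below -/
import Mathlib

section
/- Let x_1,...,x_N ∈ ℝ^n, soft assignments φ_{ic} ≥ 0 with ∑_c φ_{ic} = 1 for each i, and define μ_c = (∑_i φ_{ic} x_i)/(∑_i φ_{ic}) (assuming ∑_i φ_{ic} > 0). Define q(j|i) = ∑_{c=1}^m φ_{ic} φ_{jc} / (∑_{k=1}^N φ_{kc}). Then ∑_{i=1}^N ∑_{c=1}^m φ_{ic} ‖x_i - μ_c‖² = ∑_i ‖x_i‖² - ∑_{i,j} (x_i · x_j) q(j|i). -/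
open BigOperators

theorem prob_kmeans_contrastive_identity (N n m : ℕ)
    (x : Fin N → EuclideanSpace ℝ (Fin n))
    (φ : Fin N → Fin m → ℝ)
    (hφ0 : ∀ i c, 0 ≤ φ i c) (hφ1 : ∀ i, ∑ c, φ i c = 1)
    (hcol : ∀ c, 0 < ∑ k, φ k c)
    (μ : Fin m → EuclideanSpace ℝ (Fin n))
    (hμ : ∀ c, μ c = (∑ k, φ k c)⁻¹ • ∑ i, φ i c • x i)
    (q : Fin N → Fin N → ℝ)
    (hq : ∀ i j, q i j = ∑ c, φ i c * φ j c / ∑ k, φ k c) :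
    ∑ i, ∑ c, φ i c * ‖x i - μ c‖ ^ 2 =
      (∑ i, ‖x i‖ ^ 2) - ∑ i, ∑ j, (inner ℝ (x i) (x j) : ℝ) * q i j := by
  classical
  set s : Fin m → ℝ := fun c => ∑ k, φ k c with hs
  have hsne : ∀ c, s c ≠ 0 := fun c => (hcol c).ne'
  have hX : ∀ c, ∑ i, φ i c • x i = s c • μ c := by
    intro c
    rw [hμ c, smul_smul, mul_inv_cancel₀ (hsne c), one_smul]
  -- per-cluster identity for the LHS
  have key : ∀ c, ∑ i, φ i c * ‖x i - μ c‖ ^ 2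
      = (∑ i, φ i c * ‖x i‖ ^ 2) - s c * ‖μ c‖ ^ 2 := by
    intro c
    have h1 : ∑ i, φ i c * (inner ℝ (x i) (μ c) : ℝ) = s c * ‖μ c‖ ^ 2 := by
      have : (inner ℝ (∑ i, φ i c • x i) (μ c) : ℝ)
          = ∑ i, φ i c * (inner ℝ (x i) (μ c) : ℝ) := by
        rw [sum_inner]
        exact Finset.sum_congr rfl fun i _ => real_inner_smul_left _ _ _
      rw [← this, hX, real_inner_smul_left, real_inner_self_eq_norm_sq]
    have expand : ∀ i, ‖x i - μ c‖ ^ 2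
        = ‖x i‖ ^ 2 - 2 * (inner ℝ (x i) (μ c) : ℝ) + ‖μ c‖ ^ 2 := by
      intro i
      rw [@norm_sub_sq_real]
    have h2 : ∑ i, φ i c * ‖μ c‖ ^ 2 = s c * ‖μ c‖ ^ 2 := by
      rw [← Finset.sum_mul]
    have h3 : ∑ i, φ i c * (2 * (inner ℝ (x i) (μ c) : ℝ))
        = 2 * (s c * ‖μ c‖ ^ 2) := by
      rw [← h1, Finset.mul_sum]
      exact Finset.sum_congr rfl fun i _ => by ring
    calc ∑ i, φ i c * ‖x i - μ c‖ ^ 2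
        = ∑ i, (φ i c * ‖x i‖ ^ 2 - φ i c * (2 * (inner ℝ (x i) (μ c) : ℝ))
            + φ i c * ‖μ c‖ ^ 2) := by
          refine Finset.sum_congr rfl fun i _ => ?_
          rw [expand i]; ring
      _ = (∑ i, φ i c * ‖x i‖ ^ 2) - (∑ i, φ i c * (2 * (inner ℝ (x i) (μ c) : ℝ)))
            + ∑ i, φ i c * ‖μ c‖ ^ 2 := by
          rw [Finset.sum_add_distrib, Finset.sum_sub_distrib]
      _ = (∑ i, φ i c * ‖x i‖ ^ 2) - s c * ‖μ c‖ ^ 2 := by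
          rw [h2, h3]; ring
  -- the contrastive term
  have hin : ∀ c, ∑ i, ∑ j, φ i c * φ j c * (inner ℝ (x i) (x j) : ℝ)
      = s c ^ 2 * ‖μ c‖ ^ 2 := by
    intro c
    have : (inner ℝ (∑ i, φ i c • x i) (∑ j, φ j c • x j) : ℝ)
        = ∑ i, ∑ j, φ i c * φ j c * (inner ℝ (x i) (x j) : ℝ) := by
      rw [sum_inner]
      refine Finset.sum_congr rfl fun i _ => ?_
      rw [inner_sum]
      refine Finset.sum_congr rfl fun j _ => ?_
      rw [real_inner_smul_left, real_inner_smul_right]; ring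
    rw [← this, hX, real_inner_smul_left, real_inner_smul_right,
      real_inner_self_eq_norm_sq]
    ring
  have hR : ∑ i, ∑ j, (inner ℝ (x i) (x j) : ℝ) * q i j
      = ∑ c, s c * ‖μ c‖ ^ 2 := by
    have step1 : ∑ i, ∑ j, (inner ℝ (x i) (x j) : ℝ) * q i j
        = ∑ c, ∑ i, ∑ j, (inner ℝ (x i) (x j) : ℝ) * (φ i c * φ j c / s c) := by
      calc ∑ i, ∑ j, (inner ℝ (x i) (x j) : ℝ) * q i j
          = ∑ i, ∑ c, ∑ j, (inner ℝ (x i) (x j) : ℝ) * (φ i c * φ j c / s c) := by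
            refine Finset.sum_congr rfl fun i _ => ?_
            simp only [hq, Finset.mul_sum]
            exact Finset.sum_comm
        _ = ∑ c, ∑ i, ∑ j, (inner ℝ (x i) (x j) : ℝ) * (φ i c * φ j c / s c) :=
            Finset.sum_comm
    rw [step1]
    refine Finset.sum_congr rfl fun c _ => ?_
    have : ∑ i, ∑ j, (inner ℝ (x i) (x j) : ℝ) * (φ i c * φ j c / s c)
        = (s c)⁻¹ * ∑ i, ∑ j, φ i c * φ j c * (inner ℝ (x i) (x j) : ℝ) := by
      rw [Finset.mul_sum]
      refine Finset.sum_congr rfl fun i _ => ?_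
      rw [Finset.mul_sum]
      refine Finset.sum_congr rfl fun j _ => ?_
      field_simp
    rw [this, hin c]
    field_simp [hsne c]
  calc ∑ i, ∑ c, φ i c * ‖x i - μ c‖ ^ 2
      = ∑ c, ∑ i, φ i c * ‖x i - μ c‖ ^ 2 := Finset.sum_comm
    _ = ∑ c, ((∑ i, φ i c * ‖x i‖ ^ 2) - s c * ‖μ c‖ ^ 2) :=
        Finset.sum_congr rfl fun c _ => key c
    _ = (∑ c, ∑ i, φ i c * ‖x i‖ ^ 2) - ∑ c, s c * ‖μ c‖ ^ 2 :=
        Finset.sum_sub_distrib _ _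
    _ = (∑ i, ‖x i‖ ^ 2) - ∑ i, ∑ j, (inner ℝ (x i) (x j) : ℝ) * q i j := by
        rw [hR, Finset.sum_comm]
        congr 1
        refine Finset.sum_congr rfl fun i _ => ?_
        rw [← Finset.sum_mul, hφ1 i, one_mul]
end

section
/- Let X, Y be random variables on finite sets with joint pmf p(x,y) and let q(x|y) be any conditional pmf with q(x|y) > 0 whenever p(x,y) > 0. Then I(X;Y) = E_{p(x,y)}[log(q(x|y)/p(x))] + E_{p(y)}[D_KL(p(·|y) ‖ q(·|y))], and consequently I(X;Y) ≥ E_{p(x,y)}[log(q(x|y)/p(x))]. -/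
open Real BigOperators

theorem variational_mi_bound {X Y : Type*} [Fintype X] [Fintype Y]
    (p : X → Y → ℝ) (q : X → Y → ℝ)
    (hp0 : ∀ x y, 0 ≤ p x y) (hp1 : ∑ x, ∑ y, p x y = 1)
    (hq0 : ∀ x y, 0 ≤ q x y) (hq1 : ∀ y, ∑ x, q x y = 1)
    (hpq : ∀ x y, 0 < p x y → 0 < q x y)
    (pX : X → ℝ) (hpX : ∀ x, pX x = ∑ y, p x y)
    (pY : Y → ℝ) (hpY : ∀ y, pY y = ∑ x, p x y) :
    (∑ x, ∑ y, p x y * Real.log (p x y / (pX x * pY y)) =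
      (∑ x, ∑ y, p x y * Real.log (q x y / pX x)) +
        ∑ y, ∑ x, p x y * Real.log ((p x y / pY y) / q x y)) ∧
    (∑ x, ∑ y, p x y * Real.log (p x y / (pX x * pY y)) ≥
      ∑ x, ∑ y, p x y * Real.log (q x y / pX x)) := by
  have hpXpos : ∀ x y, 0 < p x y → 0 < pX x := by
    intro x y h
    rw [hpX]
    exact lt_of_lt_of_le h (Finset.single_le_sum (fun y' _ => hp0 x y') (Finset.mem_univ y))
  have hpYpos : ∀ x y, 0 < p x y → 0 < pY y := by
    intro x y h
    rw [hpY]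
    exact lt_of_lt_of_le h (Finset.single_le_sum (fun x' _ => hp0 x' y) (Finset.mem_univ x))
  have hYnn : ∀ y, 0 ≤ pY y := fun y => by
    rw [hpY]; exact Finset.sum_nonneg fun x _ => hp0 x y
  have key : ∀ x y, p x y * Real.log (p x y / (pX x * pY y)) =
      p x y * Real.log (q x y / pX x) + p x y * Real.log ((p x y / pY y) / q x y) := by
    intro x y
    rcases eq_or_lt_of_le (hp0 x y) with h | h
    · simp [← h]
    · have hq := hpq x y h
      have hX := hpXpos x y h
      have hY := hpYpos x y h
      rw [← mul_add, ← Real.log_mul (by positivity) (by positivity)]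
      have hq' := hq.ne'
      have hX' := hX.ne'
      have hY' := hY.ne'
      rw [show q x y / pX x * (p x y / pY y / q x y) = p x y / (pX x * pY y) by
        field_simp]
    -- equality part
  have heq : ∑ x, ∑ y, p x y * Real.log (p x y / (pX x * pY y)) =
      (∑ x, ∑ y, p x y * Real.log (q x y / pX x)) +
        ∑ y, ∑ x, p x y * Real.log ((p x y / pY y) / q x y) := by
    rw [Finset.sum_comm (f := fun y x => p x y * Real.log ((p x y / pY y) / q x y)),
      ← Finset.sum_add_distrib]
    congr 1; ext x
    rw [← Finset.sum_add_distrib]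
    exact Finset.sum_congr rfl fun y _ => key x y
  refine ⟨heq, ?_⟩
  rw [heq]
  have hKL : 0 ≤ ∑ y, ∑ x, p x y * Real.log ((p x y / pY y) / q x y) := by
    have hterm : ∀ y x, p x y - q x y * pY y ≤ p x y * Real.log ((p x y / pY y) / q x y) := by
      intro y x
      rcases eq_or_lt_of_le (hp0 x y) with h | h
      · simp [← h]
        exact mul_nonneg (hq0 x y) (hYnn y)
      · have hq := hpq x y h
        have hY := hpYpos x y h
        have ht : 0 < p x y / pY y / q x y := by positivity
        have := Real.one_sub_inv_le_log_of_pos ht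
        have h2 : p x y * (1 - (p x y / pY y / q x y)⁻¹) ≤
            p x y * Real.log ((p x y / pY y) / q x y) :=
          mul_le_mul_of_nonneg_left this (le_of_lt h)
        calc p x y - q x y * pY y = p x y * (1 - (p x y / pY y / q x y)⁻¹) := by
              field_simp
          _ ≤ _ := h2
    calc (0:ℝ) = ∑ y, ∑ x, (p x y - q x y * pY y) := by
          rw [eq_comm]
          apply Finset.sum_eq_zero
          intro y _
          rw [Finset.sum_sub_distrib, ← Finset.sum_mul, hq1, one_mul, ← hpY, sub_self]
      _ ≤ _ := Finset.sum_le_sum fun y _ => Finset.sum_le_sum fun x _ => hterm y x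
  linarith
end
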